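/- For every ω-word w and LTL formulas φ, ψ, w satisfies FG(φ U ψ) if and only if w satisfies GF ψ ∧ FG(φ ∨ ψ). -/

import Mathlib

inductive LTL (Ap : Type) : Type
  | tt : LTL Ap
  | ff : LTL Ap
  | atom : Ap → LTL Ap
  | natom : Ap → LTL Ap
  | and : LTL Ap → LTL Ap → LTL Ap
  | or : LTL Ap → LTL Ap → LTL Ap
  | next : LTL Ap → LTL Ap
  | untl : LTL Ap → LTL Ap → LTL Ap
  | release : LTL Ap → LTL Ap → LTL Ap

def LTL.F {Ap : Type} (φ : LTL Ap) : LTL Ap := LTL.untl LTL.tt φ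
def LTL.G {Ap : Type} (φ : LTL Ap) : LTL Ap := LTL.release LTL.ff φ

/-- suffix w_i of the ω-word w -/
def suff {Ap : Type} (w : ℕ → Set Ap) (i : ℕ) : ℕ → Set Ap := fun j => w (i + j)

/-- LTL satisfaction relation w ⊨ φ -/
def Sat {Ap : Type} : (ℕ → Set Ap) → LTL Ap → Prop
  | _, .tt => True
  | _, .ff => False
  | w, .atom a => a ∈ w 0
  | w, .natom a => a ∉ w 0
  | w, .and φ ψ => Sat w φ ∧ Sat w ψ
  | w, .or φ ψ => Sat w φ ∨ Sat w ψ
  | w, .next φ => Sat (suff w 1) φ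
  | w, .untl φ ψ => ∃ i, Sat (suff w i) ψ ∧ ∀ j < i, Sat (suff w j) φ
  | w, .release φ ψ =>
      (∀ i, Sat (suff w i) ψ) ∨ ∃ i, Sat (suff w i) φ ∧ ∀ j, j ≤ i → Sat (suff w j) ψ

section

variable {Ap : Type} {w : ℕ → Set Ap} {φ ψ χ : LTL Ap}

@[simp]
lemma suff_zero (w : ℕ → Set Ap) : suff w 0 = w := by
  funext k; simp [suff]

lemma suff_suff (w : ℕ → Set Ap) (i j : ℕ) : suff (suff w i) j = suff w (i + j) := by
  funext k; simp [suff, Nat.add_assoc]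

lemma suff_comm (w : ℕ → Set Ap) (i j : ℕ) : suff (suff w i) j = suff (suff w j) i := by
  rw [suff_suff, suff_suff, Nat.add_comm]

lemma sat_and : Sat w (.and φ ψ) ↔ Sat w φ ∧ Sat w ψ := Iff.rfl

lemma sat_F : Sat w χ.F ↔ ∃ i, Sat (suff w i) χ :=
  ⟨fun ⟨i, h, _⟩ => ⟨i, h⟩, fun ⟨i, h⟩ => ⟨i, h, fun _ _ => trivial⟩⟩

lemma sat_G : Sat w χ.G ↔ ∀ i, Sat (suff w i) χ :=
  ⟨fun h => h.resolve_right fun ⟨_, hff, _⟩ => hff, Or.inl⟩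

lemma Sat.F_of_suff {i : ℕ} (h : Sat (suff w i) χ.F) : Sat w χ.F := by
  obtain ⟨k, hk⟩ := sat_F.1 h
  exact sat_F.2 ⟨i + k, by rwa [← suff_suff]⟩

lemma Sat.G_suff (h : Sat w χ.G) (i : ℕ) : Sat (suff w i) χ.G :=
  sat_G.2 fun j => by rw [suff_suff]; exact sat_G.1 h (i + j)

lemma Sat.F_of_untl (h : Sat w (.untl φ ψ)) : Sat w ψ.F :=
  let ⟨i, hψ, _⟩ := h
  sat_F.2 ⟨i, hψ⟩

lemma Sat.or_of_untl (h : Sat w (.untl φ ψ)) : Sat w (.or φ ψ) := by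
  obtain ⟨k, hψ, hφ⟩ := h
  rcases Nat.eq_zero_or_pos k with rfl | hk
  · exact Or.inr (by simpa using hψ)
  · exact Or.inl (by simpa using hφ 0 hk)

/-- Witness: the first position where `ψ` holds; before it, the invariant `φ ∨ ψ` forces `φ`. -/
lemma Sat.untl_of_F_of_G_or (hF : Sat w ψ.F) (hG : Sat w (LTL.G (.or φ ψ))) :
    Sat w (.untl φ ψ) := by
  classical
  have hex := sat_F.1 hF
  refine ⟨Nat.find hex, Nat.find_spec hex, fun j hj => ?_⟩
  exact (sat_G.1 hG j).resolve_right (Nat.find_min hex hj)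

end

theorem FG_untl {Ap : Type} (w : ℕ → Set Ap) (φ ψ : LTL Ap) :
    Sat w (LTL.F (LTL.G (LTL.untl φ ψ))) ↔
      Sat w (LTL.and (LTL.G (LTL.F ψ)) (LTL.F (LTL.G (LTL.or φ ψ)))) := by
  rw [sat_and, sat_F, sat_F]
  constructor
  · rintro ⟨i, hG⟩
    refine ⟨sat_G.2 fun j => ?_, ⟨i, sat_G.2 fun j => (sat_G.1 hG j).or_of_untl⟩⟩
    have hF : Sat (suff (suff w i) j) ψ.F := (sat_G.1 hG j).F_of_untl
    rw [suff_comm] at hF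
    exact hF.F_of_suff
  · rintro ⟨hGF, i, hG⟩
    refine ⟨i, sat_G.2 fun j => Sat.untl_of_F_of_G_or ?_ (hG.G_suff j)⟩
    rw [suff_suff]
    exact sat_G.1 hGF (i + j)
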